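/- arXiv:2401.10143 — 3 statements merged into one kernel-verified Lean document; each statement's English description precedes it below -/
import Mathlib

section
/- There exists a formal context (A, X, I) and an I-compatible equivalence relation E ⊆ A × A such that the induced lower approximation S□ ⊆ A × X, defined by a S□ x iff ∀b (aEb → bIx), is not I-compatible. Concretely: A = {a, b}, X = {x, y}, I = {(a,x), (a,y), (b,y)}, E = A × A; then S□⁽⁰⁾[x] = ∅, but ∅^{↑↓} = {a} ≠ ∅, so S□⁽⁰⁾[x] is not Galois-stable. -/
/-!
Take `E = A × A`. Then every polar of `E` is all of `A`, which is always Galois-stable, while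
`S□⁽⁰⁾[x] = {a | ∀ b, b I x}`. With `b` not incident to `x` this is `∅`, but `∅` is Galois-stable
only if no object is incident to every attribute, and `a` is.
-/

def upPolar {A X : Type*} (I : Set (A × X)) (B : Set A) : Set X :=
  {x | ∀ a ∈ B, (a, x) ∈ I}

def downPolar {A X : Type*} (I : Set (A × X)) (Y : Set X) : Set A :=
  {a | ∀ x ∈ Y, (a, x) ∈ I}

open Set Order

section Polars

variable {A X : Type*} {I : Set (A × X)}

theorem eq_downPolar_upPolar_iff_isExtent {s : Set A} :
    s = downPolar I (upPolar I s) ↔ IsExtent (fun a x => (a, x) ∈ I) s := by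
  rw [eq_comm]
  exact isExtent_iff.symm

theorem univ_eq_downPolar_upPolar_univ : (univ : Set A) = downPolar I (upPolar I univ) :=
  eq_downPolar_upPolar_iff_isExtent.2 IsExtent.univ

theorem not_isExtent_empty_of_forall_mem {a : A} (ha : ∀ x, (a, x) ∈ I) :
    ¬ IsExtent (fun a x => (a, x) ∈ I) (∅ : Set A) := by
  rw [isExtent_iff, upperPolar_empty]
  intro h
  have ha_mem : a ∈ lowerPolar (fun a x => (a, x) ∈ I) univ := fun x _ => ha x
  rwa [h] at ha_mem

end Polars

/-- The context of the counterexample, with `a, b ↦ true, false` and `x, y ↦ true, false`. -/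
def counterexampleContext : Set (Bool × Bool) :=
  {p | p.1 = true ∨ p.2 = false}

theorem exists_E_compatible_Sbox_not :
    ∃ (I : Set (Bool × Bool)) (E : Set (Bool × Bool)),
      Equivalence (fun a b => (a, b) ∈ E) ∧
      -- E is I-compatible: both polars of E are Galois-stable subsets of A
      (∀ b : Bool, ({a | (a, b) ∈ E} : Set Bool) =
          downPolar I (upPolar I {a | (a, b) ∈ E})) ∧
      (∀ a : Bool, ({b | (a, b) ∈ E} : Set Bool) =
          downPolar I (upPolar I {b | (a, b) ∈ E})) ∧
      -- but S□, defined by a S□ x iff ∀ b, aEb → bIx, is not I-compatible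
      ¬ ((∀ x : Bool,
            ({a | ∀ b, (a, b) ∈ E → (b, x) ∈ I} : Set Bool) =
              downPolar I (upPolar I {a | ∀ b, (a, b) ∈ E → (b, x) ∈ I})) ∧
         (∀ a : Bool,
            ({x | ∀ b, (a, b) ∈ E → (b, x) ∈ I} : Set Bool) =
              upPolar I (downPolar I {x | ∀ b, (a, b) ∈ E → (b, x) ∈ I}))) := by
  refine ⟨counterexampleContext, univ, ⟨fun _ => trivial, fun _ => trivial, fun _ _ => trivial⟩,
    fun _ => univ_eq_downPolar_upPolar_univ, fun _ => univ_eq_downPolar_upPolar_univ, ?_⟩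
  rintro ⟨hstable, -⟩
  have hempty : {a : Bool | ∀ b, (a, b) ∈ (univ : Set (Bool × Bool)) →
      (b, true) ∈ counterexampleContext} = ∅ :=
    eq_empty_of_forall_notMem fun _ h => by simpa [counterexampleContext] using h false trivial
  have hfull : ∀ x, (true, x) ∈ counterexampleContext := fun _ => Or.inl rfl
  apply not_isExtent_empty_of_forall_mem hfull
  rw [← hempty]
  exact eq_downPolar_upPolar_iff_isExtent.1 (hstable true)
end

section
/- The class of Kripke frames (W, R) whose complement relation R^c is transitive is not closed under disjoint unions: taking W₁ = {a₁, b₁}, R₁ = {(a₁,b₁)} and W₂ = {a₂, b₂}, R₂ = {(a₂,b₂)}, the complement of each Rᵢ in Wᵢ × Wᵢ is transitive, but the complement of R₁ ⊔ R₂ in the disjoint union (W₁ ⊔ W₂) × (W₁ ⊔ W₂) is not transitive. -/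
/-!
On a two-point frame, the complement of a single edge `(a, b)` is transitive: a path
`a → v → b` in the complement would need `v ≠ a` and `v ≠ b`. In a disjoint union there are
no cross edges, so every cross pair lies in the complement; an edge `(a, b)` of the first
component is then bypassed by the complement path `inl a → inr y → inl b`.
-/

theorem transitive_compl_single_edge {α : Type*} {a b : α} (hcover : ∀ x, x = a ∨ x = b) :
    Transitive (fun u v : α => u = a ∧ v = b)ᶜ := by
  rintro u v w huv hvw ⟨rfl, rfl⟩
  rcases hcover v with rfl | rfl
  · exact hvw ⟨rfl, rfl⟩
  · exact huv ⟨rfl, rfl⟩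

theorem not_transitive_compl_sumLiftRel {α β : Type*} {r : α → α → Prop} {s : β → β → Prop}
    {a b : α} (hab : r a b) (y : β) : ¬ Transitive (Sum.LiftRel r s)ᶜ := fun htrans =>
  htrans (x := .inl a) (y := .inr y) (z := .inl b)
    Sum.not_liftRel_inl_inr Sum.not_liftRel_inr_inl (Sum.LiftRel.inl hab)

theorem sumLiftRel_single_edge_iff {α β : Type*} {a b : α} {c d : β} {u v : α ⊕ β} :
    Sum.LiftRel (fun x y => x = a ∧ y = b) (fun x y => x = c ∧ y = d) u v ↔
      (u = .inl a ∧ v = .inl b) ∨ (u = .inr c ∧ v = .inr d) := by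
  cases u <;> cases v <;> simp

theorem complement_transitive_not_closed_under_disjoint_union :
    -- each component: complement of R₁ = {(a₁,b₁)} on W₁ = {a₁,b₁} is transitive
    Transitive (fun u v : Bool => ¬ (u = false ∧ v = true)) ∧
    Transitive (fun u v : Bool => ¬ (u = false ∧ v = true)) ∧
    -- complement of the disjoint union relation is not transitive
    ¬ Transitive (fun u v : Bool ⊕ Bool =>
        ¬ ((u = Sum.inl false ∧ v = Sum.inl true) ∨
           (u = Sum.inr false ∧ v = Sum.inr true))) := by
  refine ⟨transitive_compl_single_edge Bool.dichotomy,
    transitive_compl_single_edge Bool.dichotomy, ?_⟩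
  have hunion : (fun u v : Bool ⊕ Bool =>
      ¬ ((u = Sum.inl false ∧ v = Sum.inl true) ∨ (u = Sum.inr false ∧ v = Sum.inr true))) =
      (Sum.LiftRel (fun x y => x = false ∧ y = true) (fun x y => x = false ∧ y = true))ᶜ := by
    funext u v
    simp only [Pi.compl_apply, compl_iff_not, sumLiftRel_single_edge_iff]
  rw [hunion]
  exact not_transitive_compl_sumLiftRel ⟨rfl, rfl⟩ false
end

section
/- Let (A, X, I) be a formal context with concept lattice ordered by extension inclusion, and let R ⊆ X × A be an I-compatible relation (R⁽⁰⁾[a] Galois-stable in X for each a, R⁽¹⁾[x] Galois-stable in A for each x). Define, for a concept with extension B ⊆ A, the set ⟨R⟩B := R⁽⁰⁾[B] = {x ∣ ∀a∈B, xRa}. Then for any family {B_j} of concept extensions, R⁽⁰⁾[⋁_j B_j] = ⋂_j R⁽⁰⁾[B_j], where ⋁_j B_j := I⁽⁰⁾[⋂_j I⁽¹⁾[B_j]] is the join of the concepts. In particular the diamond operation ◇, defined on intensions by ⟦◇c⟧ := R⁽⁰⁾[extension of c], turns joins of concepts into intersections of intensions. -/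
/-- `R⁽⁰⁾[B] = {x ∣ ∀ a ∈ B, xRa}` for `R ⊆ X × A`. -/
def diaPolar {A X : Type*} (R : Set (X × A)) (B : Set A) : Set X :=
  {x | ∀ a ∈ B, (x, a) ∈ R}

/-!
The polar `R⁽⁰⁾` turns unions into intersections, and the join of the concepts `B j` is the
Galois closure of `⋃ j, B j`. Compatibility says that every `R⁽¹⁾[x]` is Galois-stable, so
`⋃ j, B j ⊆ R⁽¹⁾[x]` already forces its closure into `R⁽¹⁾[x]`: the polar `R⁽⁰⁾` does not see
the closure, and `R⁽⁰⁾[⋁ j, B j] = R⁽⁰⁾[⋃ j, B j] = ⋂ j, R⁽⁰⁾[B j]`.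
-/

theorem upperPolar_lowerPolar_upperPolar_of_isExtent {α β γ : Type*}
    {r : α → β → Prop} {d : α → γ → Prop}
    (hd : ∀ c, Order.IsExtent r {a | d a c}) (s : Set α) :
    upperPolar d (lowerPolar r (upperPolar r s)) = upperPolar d s := by
  refine (upperPolar_anti d (subset_lowerPolar_upperPolar r s)).antisymm fun c hc => ?_
  exact (hd c).lowerPolar_upperPolar_subset fun a ha => hc ha

theorem upPolar_eq_upperPolar {A X : Type*} (I : Set (A × X)) :
    upPolar I = upperPolar fun a x => (a, x) ∈ I :=
  rfl

theorem downPolar_eq_lowerPolar {A X : Type*} (I : Set (A × X)) :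
    downPolar I = lowerPolar fun a x => (a, x) ∈ I :=
  rfl

theorem diaPolar_eq_upperPolar {A X : Type*} (R : Set (X × A)) :
    diaPolar R = upperPolar fun a x => (x, a) ∈ R :=
  rfl

theorem dia_join_to_meet_general {A X : Type*} (I : Set (A × X)) (R : Set (X × A))
    {ι : Type*} (B : ι → Set A)
    (hcomp1 : ∀ x : X, ({a | (x, a) ∈ R} : Set A) =
        downPolar I (upPolar I {a | (x, a) ∈ R})) :
    diaPolar R (downPolar I (⋂ j, upPolar I (B j))) = ⋂ j, diaPolar R (B j) := by
  rw [upPolar_eq_upperPolar, downPolar_eq_lowerPolar] at hcomp1 ⊢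
  rw [diaPolar_eq_upperPolar, ← upperPolar_iUnion, ← upperPolar_iUnion]
  exact upperPolar_lowerPolar_upperPolar_of_isExtent
    (fun x => Order.isExtent_iff.mpr (hcomp1 x).symm) _

theorem dia_join_to_meet {A X : Type*} (I : Set (A × X)) (R : Set (X × A))
    {ι : Type*} (B : ι → Set A)
    (hB : ∀ j, B j = downPolar I (upPolar I (B j)))
    (hcomp0 : ∀ a : A, ({x | (x, a) ∈ R} : Set X) =
        upPolar I (downPolar I {x | (x, a) ∈ R}))
    (hcomp1 : ∀ x : X, ({a | (x, a) ∈ R} : Set A) =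
        downPolar I (upPolar I {a | (x, a) ∈ R})) :
    diaPolar R (downPolar I (⋂ j, upPolar I (B j))) = ⋂ j, diaPolar R (B j) :=
  dia_join_to_meet_general I R B hcomp1
end
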